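/- Assume P : ℝ^d × ℝ^d → ℝ is continuous and symmetric, i.e. P(v,w) = P(w,v) for all v,w. Let k_d, k_o solve the scaled Riccati system and let differentiable functions v_1,…,v_N, w_1,…,w_N : [0,T] → ℝ^d solve the open-loop coupled system. Then the empirical variance σ_v²(t) = (1/N) Σ_{j=1}^N |v_j(t) − m_v(t)|², with m_v(t) = (1/N) Σ_{j=1}^N v_j(t), satisfies for all t ∈ [0,T]: (σ_v²)'(t) = −(1/N²) Σ_{i=1}^N Σ_{j=1}^N P(v_i(t),v_j(t)) |v_i(t) − v_j(t)|² − (2/ν)(k_d(t) − k_o(t)/N) · C(t), where C(t) = (1/N) Σ_{j=1}^N (v_j(t) − m_v(t)) · (w_j(t) − m_w(t)) is the empirical covariance and m_w(t) = (1/N) Σ_{j=1}^N w_j(t). -/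

import Mathlib

open Set Finset
open scoped RealInnerProductSpace

/-!
Differentiating `σ_v² = N⁻¹ ∑ ‖v_j - m_v‖²` gives `2 N⁻¹ ∑ ⟪v_j - m_v, v_j'⟫`: the derivative of the
mean drops out because centred states sum to zero. Pairing the interaction term with the centred
states and symmetrising in `(i, j)` (using `P(v, w) = P(w, v)`) turns it into
`-½ ∑ᵢ ∑ⱼ P(vᵢ, vⱼ) ‖vᵢ - vⱼ‖²`. In the feedback term the component along `∑ⱼ wⱼ` is a
common vector and drops out for the same reason, and `wᵢ` may be replaced by `wᵢ - m_w`,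
leaving the covariance.
-/

section EmpiricalMoments

variable {ι E : Type*} [Fintype ι] [NormedAddCommGroup E] [InnerProductSpace ℝ E]

noncomputable def empiricalMean (x : ι → E) : E := (Fintype.card ι : ℝ)⁻¹ • ∑ i, x i

noncomputable def empiricalVariance (x : ι → E) : ℝ :=
  (Fintype.card ι : ℝ)⁻¹ * ∑ i, ‖x i - empiricalMean x‖ ^ 2

theorem sum_sub_empiricalMean (x : ι → E) : ∑ i, (x i - empiricalMean x) = 0 := by
  rcases isEmpty_or_nonempty ι with hι | hι
  · simp
  · have hcard : (Fintype.card ι : ℝ) ≠ 0 := Nat.cast_ne_zero.mpr Fintype.card_ne_zero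
    rw [sum_sub_distrib, sum_const, card_univ, ← Nat.cast_smul_eq_nsmul ℝ, empiricalMean,
      smul_smul, mul_inv_cancel₀ hcard, one_smul, sub_self]

theorem sum_inner_sub_empiricalMean_const (x : ι → E) (c : E) :
    ∑ i, ⟪x i - empiricalMean x, c⟫ = 0 := by
  rw [← sum_inner, sum_sub_empiricalMean, inner_zero_left]

theorem sum_inner_sub_empiricalMean_sub_const (x y : ι → E) (c : E) :
    ∑ i, ⟪x i - empiricalMean x, y i - c⟫ = ∑ i, ⟪x i - empiricalMean x, y i⟫ := by
  simp only [inner_sub_right, sum_sub_distrib, sum_inner_sub_empiricalMean_const, sub_zero]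

theorem hasDerivAt_empiricalMean {x : ι → ℝ → E} {x' : ι → E} {t : ℝ}
    (hx : ∀ i, HasDerivAt (x i) (x' i) t) :
    HasDerivAt (fun s ↦ empiricalMean (x · s)) (empiricalMean x') t :=
  (HasDerivAt.fun_sum fun i _ ↦ hx i).const_smul _

theorem hasDerivAt_empiricalVariance {x : ι → ℝ → E} {x' : ι → E} {t : ℝ}
    (hx : ∀ i, HasDerivAt (x i) (x' i) t) :
    HasDerivAt (fun s ↦ empiricalVariance (x · s))
      (2 * (Fintype.card ι : ℝ)⁻¹ * ∑ i, ⟪x i t - empiricalMean (x · t), x' i⟫) t := by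
  have hsq : HasDerivAt (fun s ↦ ∑ i, ‖x i s - empiricalMean (x · s)‖ ^ 2)
      (∑ i, 2 * ⟪x i t - empiricalMean (x · t), x' i - empiricalMean x'⟫) t :=
    HasDerivAt.fun_sum fun i _ ↦ ((hx i).sub (hasDerivAt_empiricalMean hx)).norm_sq
  refine (hsq.const_mul (Fintype.card ι : ℝ)⁻¹).congr_deriv ?_
  rw [← mul_sum, sum_inner_sub_empiricalMean_sub_const]
  ring

theorem inner_sub_sub_add_inner_sub_sub (x y c : E) :
    ⟪x - c, y - x⟫ + ⟪y - c, x - y⟫ = -‖x - y‖ ^ 2 := by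
  rw [← real_inner_self_eq_norm_sq]
  simp only [inner_sub_left, inner_sub_right, real_inner_comm y x]
  ring

theorem sum_inner_sub_sum_smul_sub_of_symm {a : ι → ι → ℝ} (ha : ∀ i j, a i j = a j i)
    (x : ι → E) (c : E) :
    ∑ i, ⟪x i - c, ∑ j, a i j • (x j - x i)⟫
      = -(∑ i, ∑ j, a i j * ‖x i - x j‖ ^ 2) / 2 := by
  set S := ∑ i, ∑ j, a i j * ⟪x i - c, x j - x i⟫
  have hswap : S = ∑ i, ∑ j, a i j * ⟪x j - c, x i - x j⟫ := by
    rw [sum_comm]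
    simp only [S, ha]
  have hdouble : S + S = -∑ i, ∑ j, a i j * ‖x i - x j‖ ^ 2 := by
    nth_rewrite 2 [hswap]
    simp only [S, ← sum_add_distrib, ← mul_add, inner_sub_sub_add_inner_sub_sub, ← sum_neg_distrib,
      mul_neg]
  simp only [inner_sum, real_inner_smul_right]
  linarith

end EmpiricalMoments

theorem open_loop_variance_evolution_general (N d : ℕ)
    (T ν : ℝ)
    (P : EuclideanSpace ℝ (Fin d) → EuclideanSpace ℝ (Fin d) → ℝ)
    (hPsymm : ∀ v w, P v w = P w v)
    (kd ko : ℝ → ℝ)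
    (v w : Fin N → ℝ → EuclideanSpace ℝ (Fin d))
    (hv : ∀ t ∈ Icc (0:ℝ) T, ∀ i : Fin N,
        HasDerivAt (v i)
          ((N : ℝ)⁻¹ • ∑ j, P (v i t) (v j t) • (v j t - v i t)
            + (-(1 / ν)) • ((kd t - ko t / N) • w i t + (ko t / N) • ∑ j, w j t)) t)
    (mv mw : ℝ → EuclideanSpace ℝ (Fin d))
    (hmv : ∀ t, mv t = (N : ℝ)⁻¹ • ∑ j, v j t)
    (hmw : ∀ t, mw t = (N : ℝ)⁻¹ • ∑ j, w j t)
    (σ2v : ℝ → ℝ) (hσ2v : ∀ t, σ2v t = (N : ℝ)⁻¹ * ∑ j, ‖v j t - mv t‖ ^ 2)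
    (C : ℝ → ℝ) (hC : ∀ t, C t = (N : ℝ)⁻¹ * ∑ j, ⟪v j t - mv t, w j t - mw t⟫) :
    ∀ t ∈ Icc (0:ℝ) T,
      HasDerivAt σ2v
        (-(((N : ℝ) ^ 2)⁻¹ * ∑ i, ∑ j, P (v i t) (v j t) * ‖v i t - v j t‖ ^ 2)
          - (2 / ν) * (kd t - ko t / N) * C t) t := by
  intro t ht
  have hmean : ∀ x : Fin N → EuclideanSpace ℝ (Fin d),
      empiricalMean x = (N : ℝ)⁻¹ • ∑ j, x j := by
    simp [empiricalMean]
  have hσ : σ2v = fun s ↦ empiricalVariance (v · s) := by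
    ext s
    simp [hσ2v, empiricalVariance, hmean, hmv]
  have hC' : C t = (N : ℝ)⁻¹ * ∑ i, ⟪v i t - empiricalMean (v · t), w i t⟫ := by
    rw [hC, hmv, hmw, ← hmean, ← hmean, sum_inner_sub_empiricalMean_sub_const]
  rw [hσ]
  refine (hasDerivAt_empiricalVariance (hv t ht)).congr_deriv ?_
  simp only [Fintype.card_fin, inner_add_right, real_inner_smul_right, sum_add_distrib, ← mul_sum,
    sum_inner_sub_sum_smul_sub_of_symm (fun i j ↦ hPsymm (v i t) (v j t)),
    sum_inner_sub_empiricalMean_const, hC']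
  ring

/-- For the open-loop coupled system, the empirical variance of the
nonlinear state satisfies
`(σ_v²)'(t) = −(1/N²) Σ_i Σ_j P(v_i,v_j)‖v_i − v_j‖² − (2/ν)(k_d − k_o/N)·C(t)`,
where `C(t)` is the empirical covariance of the nonlinear and linear states. -/
theorem open_loop_variance_evolution (N d : ℕ) (hN : 1 ≤ N) (hd : 1 ≤ d)
    (T ν p : ℝ) (hT : 0 < T) (hν : 0 < ν)
    (P : EuclideanSpace ℝ (Fin d) → EuclideanSpace ℝ (Fin d) → ℝ)
    (hPcont : Continuous fun q : EuclideanSpace ℝ (Fin d) × EuclideanSpace ℝ (Fin d) =>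
      P q.1 q.2)
    (hPsymm : ∀ v w, P v w = P w v)
    (kd ko : ℝ → ℝ)
    (hkd : ∀ t ∈ Icc (0:ℝ) T, HasDerivAt kd
        (-(-2 * p * (((N : ℝ) - 1) / N) * (kd t - ko t / N)
            - (1 / ν) * ((kd t) ^ 2 + ((((N : ℝ) - 1) / N) / N) * (ko t) ^ 2) + 1)) t)
    (hkdT : kd T = 0)
    (hko : ∀ t ∈ Icc (0:ℝ) T, HasDerivAt ko
        (-(2 * p * (kd t - ko t / N)
            - (1 / ν) * (2 * kd t * ko t + (((N : ℝ) - 1) / N) * (ko t) ^ 2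
                - (ko t) ^ 2 / N))) t)
    (hkoT : ko T = 0)
    (v w : Fin N → ℝ → EuclideanSpace ℝ (Fin d))
    (hv : ∀ t ∈ Icc (0:ℝ) T, ∀ i : Fin N,
        HasDerivAt (v i)
          ((N : ℝ)⁻¹ • ∑ j, P (v i t) (v j t) • (v j t - v i t)
            + (-(1 / ν)) • ((kd t - ko t / N) • w i t + (ko t / N) • ∑ j, w j t)) t)
    (hw : ∀ t ∈ Icc (0:ℝ) T, ∀ i : Fin N,
        HasDerivAt (w i)
          ((N : ℝ)⁻¹ • ∑ j, p • (w j t - w i t)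
            + (-(1 / ν)) • ((kd t - ko t / N) • w i t + (ko t / N) • ∑ j, w j t)) t)
    (mv mw : ℝ → EuclideanSpace ℝ (Fin d))
    (hmv : ∀ t, mv t = (N : ℝ)⁻¹ • ∑ j, v j t)
    (hmw : ∀ t, mw t = (N : ℝ)⁻¹ • ∑ j, w j t)
    (σ2v : ℝ → ℝ) (hσ2v : ∀ t, σ2v t = (N : ℝ)⁻¹ * ∑ j, ‖v j t - mv t‖ ^ 2)
    (C : ℝ → ℝ) (hC : ∀ t, C t = (N : ℝ)⁻¹ * ∑ j, ⟪v j t - mv t, w j t - mw t⟫) :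
    ∀ t ∈ Icc (0:ℝ) T,
      HasDerivAt σ2v
        (-(((N : ℝ) ^ 2)⁻¹ * ∑ i, ∑ j, P (v i t) (v j t) * ‖v i t - v j t‖ ^ 2)
          - (2 / ν) * (kd t - ko t / N) * C t) t :=
  open_loop_variance_evolution_general N d T ν P hPsymm kd ko v w hv mv mw hmv hmw σ2v hσ2v C hC
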